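/- Let H ≥ 2 be an integer, E ≥ 1 and δ ≥ 0 real numbers, p ≥ 1 and L_1, …, L_{H−1} ≥ 1 real numbers, and rw_1, …, rw_{H−1}, rv_1, …, rv_{H−1} real numbers each ≥ 1. Suppose O(t,i) ≥ 0 and D(t,i) ≥ 0 are defined for all integers t ≥ 1 and 1 ≤ i ≤ H−1 and satisfy: O(t,i) ≤ t^i · (Π_{k=1}^{i} rw_k) · (Π_{k=1}^{i} rv_k)^{t−1} · E^{t·i} for all t, i; D(1,i) ≤ δ·(p·L_1 + Σ_{k=1}^{i} L_k)·Π_{k=1}^{i}(δ·L_k + rw_k·E) for all i; D(t,1) ≤ δ·L_1·p + (δ·L_1 + rv_1·E)·D(t−1,1) + δ·L_1·O(t−1,1) for all t ≥ 2; and D(t,i) ≤ (δ·L_i + rw_i·E)·D(t,i−1) + δ·L_i·O(t,i−1) + (δ·L_i + rv_i·E)·D(t−1,i) + δ·L_i·O(t−1,i) for all t ≥ 2 and 2 ≤ i ≤ H−1. Then D(t,i) ≤ t^{i+1} · δ · (p·L_1 + Σ_{k=1}^{i} L_k) · (Π_{k=1}^{i}(δ·L_k + rw_k·E)) · (Π_{k=1}^{i}(δ·L_k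 + rv_k·E))^{t−1} for all t ≥ 1 and 1 ≤ i ≤ H−1. -/

import Mathlib

/-!
Write `S_i = p L₁ + ∑_{k ≤ i} L_k`, `W_i = ∏_{k ≤ i} (δ L_k + rw_k E)` and
`V_i = ∏_{k ≤ i} (δ L_k + rv_k E)`. Since `rw_k E ≤ δ L_k + rw_k E` and
`E^{ti} = E^i (E^i)^{t-1}`, the hypothesis on `O` gives `O(t,i) ≤ t^i W_i V_i^{t-1}`.
We induct on `t` and, for fixed `t`, on `i`. With `M = δ S_i W_i V_i^{t-1}`, the four terms of
the recurrence for `D(t,i)` are at most `t^i M`, `t^{i-1} M`, `(t-1)^{i+1} M` and `(t-1)^i M`,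
and these coefficients add up to at most `t^{i+1}` when `t, i ≥ 2`. For `i = 1` the
coefficients are `1`, `(t-1)^2` and `t-1`.
-/

open Finset

noncomputable def layerProd (δ E : ℝ) (L r : ℕ → ℝ) (i : ℕ) : ℝ :=
  ∏ k ∈ Icc 1 i, (δ * L k + r k * E)

noncomputable def weightSum (p : ℝ) (L : ℕ → ℝ) (i : ℕ) : ℝ :=
  p * L 1 + ∑ k ∈ Icc 1 i, L k

/-- `δ S_i W_i V_i^e`; the claimed bound on `D(t,i)` is `t^{i+1} * diffUnit i (t-1)`. -/
noncomputable def diffUnit (δ E p : ℝ) (L rw rv : ℕ → ℝ) (i e : ℕ) : ℝ :=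
  δ * weightSum p L i * layerProd δ E L rw i * layerProd δ E L rv i ^ e

theorem mul_le_of_le_mul_of_mul_le {F d c u M : ℝ} (hF : 0 ≤ F) (hc : 0 ≤ c) (hd : d ≤ c * u)
    (hu : F * u ≤ M) : F * d ≤ c * M :=
  calc F * d ≤ F * (c * u) := mul_le_mul_of_nonneg_left hd hF
    _ = c * (F * u) := by ring
    _ ≤ c * M := mul_le_mul_of_nonneg_left hu hc

section layerProd

variable {δ E : ℝ} {L r : ℕ → ℝ} {n i : ℕ}

theorem layerProd_zero : layerProd δ E L r 0 = 1 := by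
  simp [layerProd]

theorem layerProd_succ (i : ℕ) :
    layerProd δ E L r (i + 1) = layerProd δ E L r i * (δ * L (i + 1) + r (i + 1) * E) :=
  prod_Icc_succ_top (by omega) _

theorem one_le_layerFactor {k : ℕ} (hδ : 0 ≤ δ) (hE : 1 ≤ E) (hL : 0 ≤ L k) (hr : 1 ≤ r k) :
    1 ≤ δ * L k + r k * E := by
  nlinarith [mul_nonneg hδ hL]

theorem one_le_layerProd (hδ : 0 ≤ δ) (hE : 1 ≤ E) (hL : ∀ k, 1 ≤ k → k ≤ n → 0 ≤ L k)
    (hr : ∀ k, 1 ≤ k → k ≤ n → 1 ≤ r k) (hin : i ≤ n) : 1 ≤ layerProd δ E L r i := by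
  induction i with
  | zero => exact layerProd_zero.ge
  | succ i ih =>
    rw [layerProd_succ]
    exact one_le_mul_of_one_le_of_one_le (ih (by omega))
      (one_le_layerFactor hδ hE (hL _ (by omega) hin) (hr _ (by omega) hin))

theorem layerProd_le_succ (hδ : 0 ≤ δ) (hE : 1 ≤ E) (hL : ∀ k, 1 ≤ k → k ≤ n → 0 ≤ L k)
    (hr : ∀ k, 1 ≤ k → k ≤ n → 1 ≤ r k) (hin : i + 1 ≤ n) :
    layerProd δ E L r i ≤ layerProd δ E L r (i + 1) := by
  rw [layerProd_succ]
  exact le_mul_of_one_le_right (zero_le_one.trans (one_le_layerProd hδ hE hL hr (by omega)))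
    (one_le_layerFactor hδ hE (hL _ (by omega) hin) (hr _ (by omega) hin))

theorem layerFactor_le_layerProd (hδ : 0 ≤ δ) (hE : 1 ≤ E)
    (hL : ∀ k, 1 ≤ k → k ≤ n → 0 ≤ L k) (hr : ∀ k, 1 ≤ k → k ≤ n → 1 ≤ r k) (hin : i + 1 ≤ n) :
    δ * L (i + 1) + r (i + 1) * E ≤ layerProd δ E L r (i + 1) := by
  rw [layerProd_succ]
  exact le_mul_of_one_le_left (zero_le_one.trans
    (one_le_layerFactor hδ hE (hL _ (by omega) hin) (hr _ (by omega) hin)))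
    (one_le_layerProd hδ hE hL hr (by omega))

theorem prod_mul_pow_le_layerProd (hδ : 0 ≤ δ) (hE : 0 ≤ E)
    (hL : ∀ k, 1 ≤ k → k ≤ n → 0 ≤ L k) (hr : ∀ k, 1 ≤ k → k ≤ n → 0 ≤ r k) (hin : i ≤ n) :
    (∏ k ∈ Icc 1 i, r k) * E ^ i ≤ layerProd δ E L r i := by
  have hEi : E ^ i = ∏ _k ∈ Icc 1 i, E := by simp
  rw [hEi, ← prod_mul_distrib]
  refine prod_le_prod (fun k hk => ?_) (fun k hk => ?_) <;> obtain ⟨hk1, hki⟩ := mem_Icc.1 hk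
  · exact mul_nonneg (hr k hk1 (hki.trans hin)) hE
  · exact le_add_of_nonneg_left (mul_nonneg hδ (hL k hk1 (hki.trans hin)))

end layerProd

section weightSum

variable {p : ℝ} {L : ℕ → ℝ} {n i : ℕ}

theorem weightSum_succ (i : ℕ) : weightSum p L (i + 1) = weightSum p L i + L (i + 1) := by
  rw [weightSum, weightSum, sum_Icc_succ_top (by omega), add_assoc]

theorem mul_le_weightSum (hL : ∀ k, 1 ≤ k → k ≤ n → 0 ≤ L k) (hin : i ≤ n) :
    p * L 1 ≤ weightSum p L i :=
  le_add_of_nonneg_right (sum_nonneg fun k hk =>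
    hL k (mem_Icc.1 hk).1 ((mem_Icc.1 hk).2.trans hin))

theorem weightSum_nonneg (hp : 0 ≤ p) (hL : ∀ k, 1 ≤ k → k ≤ n → 0 ≤ L k) (hn : 1 ≤ n)
    (hin : i ≤ n) : 0 ≤ weightSum p L i :=
  (mul_nonneg hp (hL 1 le_rfl hn)).trans (mul_le_weightSum hL hin)

theorem weightSum_le_succ (hL : 0 ≤ L (i + 1)) : weightSum p L i ≤ weightSum p L (i + 1) := by
  rw [weightSum_succ]
  exact le_add_of_nonneg_right hL

theorem le_weightSum_succ (hp : 0 ≤ p) (hL : ∀ k, 1 ≤ k → k ≤ n → 0 ≤ L k) (hin : i + 1 ≤ n) :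
    L (i + 1) ≤ weightSum p L (i + 1) := by
  rw [weightSum_succ]
  exact le_add_of_nonneg_left (weightSum_nonneg hp hL (by omega) (by omega))

end weightSum

theorem add_one_pow_add_pow_le (x : ℝ) (hx : 1 ≤ x) (j : ℕ) :
    (x + 1) ^ (j + 1) + (x + 1) ^ j + x ^ (j + 2) ≤ (x + 1) ^ (j + 2) := by
  induction j with
  | zero => norm_num; nlinarith
  | succ j ih =>
    have hxj : x ^ (j + 3) ≤ (x + 1) * x ^ (j + 2) := by
      rw [pow_succ, mul_comm]
      exact mul_le_mul_of_nonneg_right (by linarith) (by positivity)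
    calc (x + 1) ^ (j + 2) + (x + 1) ^ (j + 1) + x ^ (j + 3)
        = (x + 1) * ((x + 1) ^ (j + 1) + (x + 1) ^ j) + x ^ (j + 3) := by ring
      _ ≤ (x + 1) * ((x + 1) ^ (j + 1) + (x + 1) ^ j) + (x + 1) * x ^ (j + 2) := by gcongr
      _ = (x + 1) * ((x + 1) ^ (j + 1) + (x + 1) ^ j + x ^ (j + 2)) := by ring
      _ ≤ (x + 1) * (x + 1) ^ (j + 2) := by gcongr
      _ = (x + 1) ^ (j + 3) := by ring

theorem add_one_pow_add_pow_add_pow_le (x : ℝ) (hx : 1 ≤ x) {i : ℕ} (hi : 1 ≤ i) :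
    (x + 1) ^ (i + 1) + (x + 1) ^ i + x ^ (i + 2) + x ^ (i + 1) ≤ (x + 1) ^ (i + 2) := by
  obtain ⟨j, rfl⟩ := Nat.exists_eq_add_of_le' hi
  calc (x + 1) ^ (j + 1 + 1) + (x + 1) ^ (j + 1) + x ^ (j + 1 + 2) + x ^ (j + 1 + 1)
      = (x + 1) * ((x + 1) ^ (j + 1) + (x + 1) ^ j + x ^ (j + 2)) := by ring
    _ ≤ (x + 1) * (x + 1) ^ (j + 2) := by gcongr; exact add_one_pow_add_pow_le x hx j
    _ = (x + 1) ^ (j + 1 + 2) := by ring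

theorem le_prod_mul_prod_pow {δ E : ℝ} {L rw rv : ℕ → ℝ} {n : ℕ} (hδ : 0 ≤ δ) (hE : 0 ≤ E)
    (hL : ∀ k, 1 ≤ k → k ≤ n → 0 ≤ L k) (hrw : ∀ k, 1 ≤ k → k ≤ n → 0 ≤ rw k)
    (hrv : ∀ k, 1 ≤ k → k ≤ n → 0 ≤ rv k) (s : ℕ) {i : ℕ} (hin : i ≤ n) :
    (↑(s + 1) : ℝ) ^ i * (∏ k ∈ Icc 1 i, rw k) * (∏ k ∈ Icc 1 i, rv k) ^ (s + 1 - 1)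
        * E ^ ((s + 1) * i)
      ≤ (↑(s + 1) : ℝ) ^ i * (layerProd δ E L rw i * layerProd δ E L rv i ^ s) := by
  have hA0 : 0 ≤ (∏ k ∈ Icc 1 i, rw k) * E ^ i := mul_nonneg
    (prod_nonneg fun k hk => hrw k (mem_Icc.1 hk).1 ((mem_Icc.1 hk).2.trans hin)) (pow_nonneg hE _)
  have hB0 : 0 ≤ (∏ k ∈ Icc 1 i, rv k) * E ^ i := mul_nonneg
    (prod_nonneg fun k hk => hrv k (mem_Icc.1 hk).1 ((mem_Icc.1 hk).2.trans hin)) (pow_nonneg hE _)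
  have hW := prod_mul_pow_le_layerProd hδ hE hL hrw hin
  have hV := prod_mul_pow_le_layerProd hδ hE hL hrv hin
  calc (↑(s + 1) : ℝ) ^ i * (∏ k ∈ Icc 1 i, rw k) * (∏ k ∈ Icc 1 i, rv k) ^ (s + 1 - 1)
        * E ^ ((s + 1) * i)
      = (↑(s + 1) : ℝ) ^ i * (((∏ k ∈ Icc 1 i, rw k) * E ^ i)
        * ((∏ k ∈ Icc 1 i, rv k) * E ^ i) ^ s) := by
        rw [Nat.add_sub_cancel, add_mul, one_mul, pow_add, pow_mul']; ring
    _ ≤ _ := mul_le_mul_of_nonneg_left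
        (mul_le_mul hW (pow_le_pow_left₀ hB0 hV s) (pow_nonneg hB0 s) (hA0.trans hW))
        (by positivity)

section diffUnit

variable {δ E p : ℝ} {L rw rv : ℕ → ℝ} {n i : ℕ}

theorem diffUnit_nonneg (hδ : 0 ≤ δ) (hE : 1 ≤ E) (hp : 0 ≤ p)
    (hL : ∀ k, 1 ≤ k → k ≤ n → 0 ≤ L k) (hrw : ∀ k, 1 ≤ k → k ≤ n → 1 ≤ rw k)
    (hrv : ∀ k, 1 ≤ k → k ≤ n → 1 ≤ rv k) (hi : 1 ≤ i) (hin : i ≤ n) (e : ℕ) :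
    0 ≤ diffUnit δ E p L rw rv i e := by
  have := weightSum_nonneg hp hL (hi.trans hin) hin
  have := zero_le_one.trans (one_le_layerProd hδ hE hL hrw hin)
  have := zero_le_one.trans (one_le_layerProd hδ hE hL hrv hin)
  unfold diffUnit
  positivity

theorem mul_le_diffUnit (hδ : 0 ≤ δ) (hE : 1 ≤ E) (hp : 0 ≤ p)
    (hL : ∀ k, 1 ≤ k → k ≤ n → 0 ≤ L k) (hrw : ∀ k, 1 ≤ k → k ≤ n → 1 ≤ rw k)
    (hrv : ∀ k, 1 ≤ k → k ≤ n → 1 ≤ rv k) (hi : 1 ≤ i) (hin : i ≤ n) (e : ℕ) :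
    δ * L 1 * p ≤ diffUnit δ E p L rw rv i e := by
  have hS := weightSum_nonneg hp hL (hi.trans hin) hin
  calc δ * L 1 * p = δ * (p * L 1) := by ring
    _ ≤ δ * weightSum p L i := mul_le_mul_of_nonneg_left (mul_le_weightSum hL hin) hδ
    _ ≤ δ * weightSum p L i * (layerProd δ E L rw i * layerProd δ E L rv i ^ e) :=
        le_mul_of_one_le_right (mul_nonneg hδ hS) (one_le_mul_of_one_le_of_one_le
          (one_le_layerProd hδ hE hL hrw hin) (one_le_pow₀ (one_le_layerProd hδ hE hL hrv hin)))
    _ = diffUnit δ E p L rw rv i e := by rw [diffUnit]; ring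

theorem layerFactor_mul_diffUnit_le_layer_succ (hδ : 0 ≤ δ) (hE : 1 ≤ E) (hp : 0 ≤ p)
    (hL : ∀ k, 1 ≤ k → k ≤ n → 0 ≤ L k) (hrw : ∀ k, 1 ≤ k → k ≤ n → 1 ≤ rw k)
    (hrv : ∀ k, 1 ≤ k → k ≤ n → 1 ≤ rv k) (hin : i + 1 ≤ n) (e : ℕ) :
    (δ * L (i + 1) + rw (i + 1) * E) * diffUnit δ E p L rw rv i e
      ≤ diffUnit δ E p L rw rv (i + 1) e := by
  have hS := weightSum_nonneg hp hL (by omega) (by omega) (p := p) (i := i)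
  have hSS' := weightSum_le_succ (p := p) (hL _ (by omega) hin)
  have := hS.trans hSS'
  have := zero_le_one.trans (one_le_layerProd hδ hE hL hrw (by omega) (i := i))
  have := zero_le_one.trans (one_le_layerProd hδ hE hL hrv (by omega) (i := i))
  have := zero_le_one.trans (one_le_layerFactor hδ hE (hL _ (by omega) hin) (hrw _ (by omega) hin))
  have hVV' := layerProd_le_succ hδ hE hL hrv hin
  rw [diffUnit, diffUnit, layerProd_succ (i := i) (r := rw)]
  calc (δ * L (i + 1) + rw (i + 1) * E) * (δ * weightSum p L i * layerProd δ E L rw i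
        * layerProd δ E L rv i ^ e)
      = δ * weightSum p L i * (layerProd δ E L rw i * (δ * L (i + 1) + rw (i + 1) * E))
        * layerProd δ E L rv i ^ e := by ring
    _ ≤ _ := by gcongr

theorem layerFactor_mul_diffUnit_le_pow_succ (hδ : 0 ≤ δ) (hE : 1 ≤ E) (hp : 0 ≤ p)
    (hL : ∀ k, 1 ≤ k → k ≤ n → 0 ≤ L k) (hrw : ∀ k, 1 ≤ k → k ≤ n → 1 ≤ rw k)
    (hrv : ∀ k, 1 ≤ k → k ≤ n → 1 ≤ rv k) (hi : 1 ≤ i) (hin : i ≤ n) (e : ℕ) :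
    (δ * L i + rv i * E) * diffUnit δ E p L rw rv i e ≤ diffUnit δ E p L rw rv i (e + 1) := by
  obtain ⟨j, rfl⟩ := Nat.exists_eq_add_of_le' hi
  have := weightSum_nonneg hp hL (by omega) hin (p := p)
  have := zero_le_one.trans (one_le_layerProd hδ hE hL hrw hin)
  have := zero_le_one.trans (one_le_layerProd hδ hE hL hrv hin)
  have hFv := layerFactor_le_layerProd hδ hE hL hrv hin
  calc (δ * L (j + 1) + rv (j + 1) * E) * diffUnit δ E p L rw rv (j + 1) e
      = δ * weightSum p L (j + 1) * layerProd δ E L rw (j + 1)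
        * (layerProd δ E L rv (j + 1) ^ e * (δ * L (j + 1) + rv (j + 1) * E)) := by
        rw [diffUnit]; ring
    _ ≤ δ * weightSum p L (j + 1) * layerProd δ E L rw (j + 1)
        * (layerProd δ E L rv (j + 1) ^ e * layerProd δ E L rv (j + 1)) := by gcongr
    _ = diffUnit δ E p L rw rv (j + 1) (e + 1) := by rw [diffUnit, pow_succ]

theorem mul_layerProd_le_diffUnit_layer_succ (hδ : 0 ≤ δ) (hE : 1 ≤ E) (hp : 0 ≤ p)
    (hL : ∀ k, 1 ≤ k → k ≤ n → 0 ≤ L k) (hrw : ∀ k, 1 ≤ k → k ≤ n → 1 ≤ rw k)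
    (hrv : ∀ k, 1 ≤ k → k ≤ n → 1 ≤ rv k) (hin : i + 1 ≤ n) (e : ℕ) :
    δ * L (i + 1) * (layerProd δ E L rw i * layerProd δ E L rv i ^ e)
      ≤ diffUnit δ E p L rw rv (i + 1) e := by
  have hL0 := hL _ (by omega) hin
  have hLS := le_weightSum_succ hp hL hin (p := p)
  have := hL0.trans hLS
  have := zero_le_one.trans (one_le_layerProd hδ hE hL hrw (by omega) (i := i))
  have := zero_le_one.trans (one_le_layerProd hδ hE hL hrv (by omega) (i := i))
  have := zero_le_one.trans (one_le_layerProd hδ hE hL hrw hin)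
  have := layerProd_le_succ hδ hE hL hrw hin
  have := layerProd_le_succ hδ hE hL hrv hin
  calc δ * L (i + 1) * (layerProd δ E L rw i * layerProd δ E L rv i ^ e)
      = δ * L (i + 1) * layerProd δ E L rw i * layerProd δ E L rv i ^ e := by ring
    _ ≤ diffUnit δ E p L rw rv (i + 1) e := by rw [diffUnit]; gcongr

theorem mul_layerProd_le_diffUnit_pow_succ (hδ : 0 ≤ δ) (hE : 1 ≤ E) (hp : 0 ≤ p)
    (hL : ∀ k, 1 ≤ k → k ≤ n → 0 ≤ L k) (hrw : ∀ k, 1 ≤ k → k ≤ n → 1 ≤ rw k)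
    (hrv : ∀ k, 1 ≤ k → k ≤ n → 1 ≤ rv k) (hi : 1 ≤ i) (hin : i ≤ n) (e : ℕ) :
    δ * L i * (layerProd δ E L rw i * layerProd δ E L rv i ^ e)
      ≤ diffUnit δ E p L rw rv i (e + 1) := by
  obtain ⟨j, rfl⟩ := Nat.exists_eq_add_of_le' hi
  have hL0 := hL _ (by omega) hin
  have hLS := le_weightSum_succ hp hL hin (p := p)
  have := hL0.trans hLS
  have := zero_le_one.trans (one_le_layerProd hδ hE hL hrw hin)
  have := one_le_layerProd hδ hE hL hrv hin
  calc δ * L (j + 1) * (layerProd δ E L rw (j + 1) * layerProd δ E L rv (j + 1) ^ e)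
      = δ * L (j + 1) * layerProd δ E L rw (j + 1) * layerProd δ E L rv (j + 1) ^ e := by ring
    _ ≤ diffUnit δ E p L rw rv (j + 1) (e + 1) := by
        rw [diffUnit]
        gcongr
        omega

theorem diff_le_of_recurrence_one (hδ : 0 ≤ δ) (hE : 1 ≤ E) (hp : 0 ≤ p)
    (hL : ∀ k, 1 ≤ k → k ≤ n → 0 ≤ L k) (hrw : ∀ k, 1 ≤ k → k ≤ n → 1 ≤ rw k)
    (hrv : ∀ k, 1 ≤ k → k ≤ n → 1 ≤ rv k) (hn : 1 ≤ n) {D O : ℕ → ℕ → ℝ} {s : ℕ}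
    (hrec : D (s + 2) 1 ≤ δ * L 1 * p + (δ * L 1 + rv 1 * E) * D (s + 1) 1
      + δ * L 1 * O (s + 1) 1)
    (hD : D (s + 1) 1 ≤ (↑(s + 1) : ℝ) ^ (1 + 1) * diffUnit δ E p L rw rv 1 s)
    (hO : O (s + 1) 1 ≤ (↑(s + 1) : ℝ) ^ 1 * (layerProd δ E L rw 1 * layerProd δ E L rv 1 ^ s)) :
    D (s + 2) 1 ≤ (↑(s + 2) : ℝ) ^ (1 + 1) * diffUnit δ E p L rw rv 1 (s + 1) := by
  have hx : (↑(s + 2) : ℝ) = ↑(s + 1) + 1 := by push_cast; ring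
  have hFv := one_le_layerFactor hδ hE (hL 1 le_rfl hn) (hrv 1 le_rfl hn)
  have hM := diffUnit_nonneg hδ hE hp hL hrw hrv le_rfl hn (s + 1)
  have hpTerm := mul_le_diffUnit hδ hE hp hL hrw hrv le_rfl hn (s + 1)
  have hDTerm := mul_le_of_le_mul_of_mul_le (zero_le_one.trans hFv) (by positivity) hD
    (layerFactor_mul_diffUnit_le_pow_succ hδ hE hp hL hrw hrv le_rfl hn s)
  have hOTerm := mul_le_of_le_mul_of_mul_le (mul_nonneg hδ (hL 1 le_rfl hn)) (by positivity) hO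
    (mul_layerProd_le_diffUnit_pow_succ hδ hE hp hL hrw hrv le_rfl hn s)
  calc D (s + 2) 1
      ≤ (1 + (↑(s + 1) : ℝ) ^ (1 + 1) + (↑(s + 1) : ℝ) ^ 1) * diffUnit δ E p L rw rv 1 (s + 1) := by
        linarith
    _ ≤ (↑(s + 2) : ℝ) ^ (1 + 1) * diffUnit δ E p L rw rv 1 (s + 1) := by
        rw [hx]
        have : (0 : ℝ) ≤ ↑(s + 1) := Nat.cast_nonneg _
        exact mul_le_mul_of_nonneg_right (by ring_nf; linarith) hM

theorem diff_le_of_recurrence_succ (hδ : 0 ≤ δ) (hE : 1 ≤ E) (hp : 0 ≤ p)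
    (hL : ∀ k, 1 ≤ k → k ≤ n → 0 ≤ L k) (hrw : ∀ k, 1 ≤ k → k ≤ n → 1 ≤ rw k)
    (hrv : ∀ k, 1 ≤ k → k ≤ n → 1 ≤ rv k) {D O : ℕ → ℕ → ℝ} {s i : ℕ} (hi : 1 ≤ i)
    (hin : i + 1 ≤ n)
    (hrec : D (s + 2) (i + 1) ≤ (δ * L (i + 1) + rw (i + 1) * E) * D (s + 2) i
      + δ * L (i + 1) * O (s + 2) i + (δ * L (i + 1) + rv (i + 1) * E) * D (s + 1) (i + 1)
      + δ * L (i + 1) * O (s + 1) (i + 1))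
    (hDa : D (s + 2) i ≤ (↑(s + 2) : ℝ) ^ (i + 1) * diffUnit δ E p L rw rv i (s + 1))
    (hDb : D (s + 1) (i + 1) ≤ (↑(s + 1) : ℝ) ^ (i + 1 + 1) * diffUnit δ E p L rw rv (i + 1) s)
    (hOa : O (s + 2) i ≤ (↑(s + 2) : ℝ) ^ i
      * (layerProd δ E L rw i * layerProd δ E L rv i ^ (s + 1)))
    (hOb : O (s + 1) (i + 1) ≤ (↑(s + 1) : ℝ) ^ (i + 1)
      * (layerProd δ E L rw (i + 1) * layerProd δ E L rv (i + 1) ^ s)) :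
    D (s + 2) (i + 1) ≤ (↑(s + 2) : ℝ) ^ (i + 1 + 1) * diffUnit δ E p L rw rv (i + 1) (s + 1) := by
  have hx : (↑(s + 2) : ℝ) = ↑(s + 1) + 1 := by push_cast; ring
  have hFw := one_le_layerFactor hδ hE (hL _ (by omega) hin) (hrw _ (by omega) hin)
  have hFv := one_le_layerFactor hδ hE (hL _ (by omega) hin) (hrv _ (by omega) hin)
  have hδL := mul_nonneg hδ (hL _ (by omega) hin)
  have hM := diffUnit_nonneg hδ hE hp hL hrw hrv (by omega) hin (s + 1)
  have hDaTerm := mul_le_of_le_mul_of_mul_le (zero_le_one.trans hFw) (by positivity) hDa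
    (layerFactor_mul_diffUnit_le_layer_succ hδ hE hp hL hrw hrv hin (s + 1))
  have hOaTerm := mul_le_of_le_mul_of_mul_le hδL (by positivity) hOa
    (mul_layerProd_le_diffUnit_layer_succ hδ hE hp hL hrw hrv hin (s + 1))
  have hDbTerm := mul_le_of_le_mul_of_mul_le (zero_le_one.trans hFv) (by positivity) hDb
    (layerFactor_mul_diffUnit_le_pow_succ hδ hE hp hL hrw hrv (by omega) hin s)
  have hObTerm := mul_le_of_le_mul_of_mul_le hδL (by positivity) hOb
    (mul_layerProd_le_diffUnit_pow_succ hδ hE hp hL hrw hrv (by omega) hin s)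
  calc D (s + 2) (i + 1)
      ≤ ((↑(s + 2) : ℝ) ^ (i + 1) + (↑(s + 2) : ℝ) ^ i + (↑(s + 1) : ℝ) ^ (i + 1 + 1)
          + (↑(s + 1) : ℝ) ^ (i + 1)) * diffUnit δ E p L rw rv (i + 1) (s + 1) := by
        linarith
    _ ≤ (↑(s + 2) : ℝ) ^ (i + 1 + 1) * diffUnit δ E p L rw rv (i + 1) (s + 1) := by
        rw [hx]
        exact mul_le_mul_of_nonneg_right
          (add_one_pow_add_pow_add_pow_le _ (by simp) hi) hM

end diffUnit

theorem recurrence_diff_bound_dense_general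
    (H : ℕ) (E : ℝ) (hE : 1 ≤ E) (δ : ℝ) (hδ : 0 ≤ δ)
    (p : ℝ) (hp : 1 ≤ p)
    (L : ℕ → ℝ) (hL : ∀ k, 1 ≤ k → k ≤ H - 1 → 1 ≤ L k)
    (rw rv : ℕ → ℝ)
    (hrw : ∀ k, 1 ≤ k → k ≤ H - 1 → 1 ≤ rw k)
    (hrv : ∀ k, 1 ≤ k → k ≤ H - 1 → 1 ≤ rv k)
    (O D : ℕ → ℕ → ℝ)
    (hObd : ∀ t i, 1 ≤ t → 1 ≤ i → i ≤ H - 1 →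
      O t i ≤ (t : ℝ) ^ i * (∏ k ∈ Finset.Icc 1 i, rw k)
        * (∏ k ∈ Finset.Icc 1 i, rv k) ^ (t - 1) * E ^ (t * i))
    (h1 : ∀ i, 1 ≤ i → i ≤ H - 1 →
      D 1 i ≤ δ * (p * L 1 + ∑ k ∈ Finset.Icc 1 i, L k)
        * ∏ k ∈ Finset.Icc 1 i, (δ * L k + rw k * E))
    (h2 : ∀ t, 2 ≤ t →
      D t 1 ≤ δ * L 1 * p + (δ * L 1 + rv 1 * E) * D (t - 1) 1 + δ * L 1 * O (t - 1) 1)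
    (h3 : ∀ t i, 2 ≤ t → 2 ≤ i → i ≤ H - 1 →
      D t i ≤ (δ * L i + rw i * E) * D t (i - 1) + δ * L i * O t (i - 1)
        + (δ * L i + rv i * E) * D (t - 1) i + δ * L i * O (t - 1) i) :
    ∀ t i, 1 ≤ t → 1 ≤ i → i ≤ H - 1 →
      D t i ≤ (t : ℝ) ^ (i + 1) * δ * (p * L 1 + ∑ k ∈ Finset.Icc 1 i, L k)
        * (∏ k ∈ Finset.Icc 1 i, (δ * L k + rw k * E))
        * (∏ k ∈ Finset.Icc 1 i, (δ * L k + rv k * E)) ^ (t - 1) := by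
  have hp0 : 0 ≤ p := zero_le_one.trans hp
  have hL0 : ∀ k, 1 ≤ k → k ≤ H - 1 → 0 ≤ L k := fun k hk hkH => zero_le_one.trans (hL k hk hkH)
  have hO : ∀ s i, 1 ≤ i → i ≤ H - 1 → O (s + 1) i
      ≤ (↑(s + 1) : ℝ) ^ i * (layerProd δ E L rw i * layerProd δ E L rv i ^ s) :=
    fun s i hi hiH => (hObd (s + 1) i (by omega) hi hiH).trans <|
      le_prod_mul_prod_pow hδ (zero_le_one.trans hE) hL0
        (fun k hk hkH => zero_le_one.trans (hrw k hk hkH))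
        (fun k hk hkH => zero_le_one.trans (hrv k hk hkH)) s hiH
  have key : ∀ s i, 1 ≤ i → i ≤ H - 1 →
      D (s + 1) i ≤ (↑(s + 1) : ℝ) ^ (i + 1) * diffUnit δ E p L rw rv i s := by
    intro s
    induction s with
    | zero => intro i hi hiH; simpa [diffUnit, weightSum, layerProd] using h1 i hi hiH
    | succ s ihs =>
      intro i hi
      induction i, hi using Nat.le_induction with
      | base =>
        intro hH
        exact diff_le_of_recurrence_one hδ hE hp0 hL0 hrw hrv hH (h2 (s + 2) (by omega))
          (ihs 1 le_rfl hH) (hO s 1 le_rfl hH)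
      | succ i hi ihi =>
        intro hiH
        exact diff_le_of_recurrence_succ hδ hE hp0 hL0 hrw hrv hi hiH
          (h3 (s + 2) (i + 1) (by omega) (by omega) hiH) (ihi (by omega))
          (ihs (i + 1) (by omega) hiH) (hO (s + 1) i hi (by omega)) (hO s (i + 1) (by omega) hiH)
  intro t i ht hi hiH
  obtain ⟨s, rfl⟩ := Nat.exists_eq_add_of_le' ht
  rw [Nat.add_sub_cancel]
  calc D (s + 1) i ≤ (↑(s + 1) : ℝ) ^ (i + 1) * diffUnit δ E p L rw rv i s := key s i hi hiH
    _ = _ := by rw [diffUnit, weightSum, layerProd, layerProd]; ring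

/-- If the nonnegative families `O(t,i)` and `D(t,i)` (for `t ≥ 1`, `1 ≤ i ≤ H-1`) satisfy
`O(t,i) ≤ t^i (∏_{k=1}^i rw_k) (∏_{k=1}^i rv_k)^{t-1} E^{t i}`,
`D(1,i) ≤ δ (p L₁ + Σ_{k=1}^i L_k) ∏_{k=1}^i (δ L_k + rw_k E)`,
`D(t,1) ≤ δ L₁ p + (δ L₁ + rv_1 E) D(t-1,1) + δ L₁ O(t-1,1)` for `t ≥ 2`, and
`D(t,i) ≤ (δ L_i + rw_i E) D(t,i-1) + δ L_i O(t,i-1) + (δ L_i + rv_i E) D(t-1,i)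
  + δ L_i O(t-1,i)` for `t ≥ 2`, `2 ≤ i ≤ H-1`, then
`D(t,i) ≤ t^{i+1} δ (p L₁ + Σ_{k=1}^i L_k) (∏_{k=1}^i (δ L_k + rw_k E))
  (∏_{k=1}^i (δ L_k + rv_k E))^{t-1}` for all `t ≥ 1`, `1 ≤ i ≤ H-1`. -/
theorem recurrence_diff_bound_dense
    (H : ℕ) (hH : 2 ≤ H) (E : ℝ) (hE : 1 ≤ E) (δ : ℝ) (hδ : 0 ≤ δ)
    (p : ℝ) (hp : 1 ≤ p)
    (L : ℕ → ℝ) (hL : ∀ k, 1 ≤ k → k ≤ H - 1 → 1 ≤ L k)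
    (rw rv : ℕ → ℝ)
    (hrw : ∀ k, 1 ≤ k → k ≤ H - 1 → 1 ≤ rw k)
    (hrv : ∀ k, 1 ≤ k → k ≤ H - 1 → 1 ≤ rv k)
    (O D : ℕ → ℕ → ℝ)
    (hO : ∀ t i, 1 ≤ t → 1 ≤ i → i ≤ H - 1 → 0 ≤ O t i)
    (hD : ∀ t i, 1 ≤ t → 1 ≤ i → i ≤ H - 1 → 0 ≤ D t i)
    (hObd : ∀ t i, 1 ≤ t → 1 ≤ i → i ≤ H - 1 →
      O t i ≤ (t : ℝ) ^ i * (∏ k ∈ Finset.Icc 1 i, rw k)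
        * (∏ k ∈ Finset.Icc 1 i, rv k) ^ (t - 1) * E ^ (t * i))
    (h1 : ∀ i, 1 ≤ i → i ≤ H - 1 →
      D 1 i ≤ δ * (p * L 1 + ∑ k ∈ Finset.Icc 1 i, L k)
        * ∏ k ∈ Finset.Icc 1 i, (δ * L k + rw k * E))
    (h2 : ∀ t, 2 ≤ t →
      D t 1 ≤ δ * L 1 * p + (δ * L 1 + rv 1 * E) * D (t - 1) 1 + δ * L 1 * O (t - 1) 1)
    (h3 : ∀ t i, 2 ≤ t → 2 ≤ i → i ≤ H - 1 →
      D t i ≤ (δ * L i + rw i * E) * D t (i - 1) + δ * L i * O t (i - 1)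
        + (δ * L i + rv i * E) * D (t - 1) i + δ * L i * O (t - 1) i) :
    ∀ t i, 1 ≤ t → 1 ≤ i → i ≤ H - 1 →
      D t i ≤ (t : ℝ) ^ (i + 1) * δ * (p * L 1 + ∑ k ∈ Finset.Icc 1 i, L k)
        * (∏ k ∈ Finset.Icc 1 i, (δ * L k + rw k * E))
        * (∏ k ∈ Finset.Icc 1 i, (δ * L k + rv k * E)) ^ (t - 1) :=
  recurrence_diff_bound_dense_general H E hE δ hδ p hp L hL rw rv hrw hrv O D hObd h1 h2 h3
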